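/- arXiv:2307.16300 — 9 statements merged into one kernel-verified Lean document; each statement's English description precedes it below -/
import Mathlib

section
/- For every ξ ∈ ℝ, define S(ξ) := diag(β(ξ)/p̄_ρ, 1, 1). Then S(ξ) is symmetric and positive definite, the matrix S(ξ)·A⁰ is symmetric and positive definite, the matrix S(ξ)·A(ξ) is symmetric, and the matrix S(ξ)·(ξ²·B) is symmetric and positive semidefinite. (Hence the linearized Navier–Stokes–Fourier–Korteweg system is symbol symmetrizable in the sense of Humpherys, with symbol symmetrizer S(ξ).) -/
open Matrix

/-- The linearized Navier–Stokes–Fourier–Korteweg system is symbol symmetrizable in the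
sense of Humpherys, with symbol symmetrizer `S(ξ) = diag(β(ξ)/p̄_ρ, 1, 1)`. -/
theorem nsfk_symbol_symmetrizable (ρ θ pρ pθ eθ k μ α u : ℝ)
    (hρ : 0 < ρ) (hθ : 0 < θ) (hpρ : 0 < pρ) (hpθ : 0 < pθ) (heθ : 0 < eθ)
    (hk : 0 < k) (hμ : 0 < μ) (hα : 0 < α) :
    ∀ ξ : ℝ,
      let β : ℝ := pρ + ξ ^ 2 * k * ρ
      let S : Matrix (Fin 3) (Fin 3) ℝ := !![β / pρ, 0, 0; 0, 1, 0; 0, 0, 1]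
      let A0 : Matrix (Fin 3) (Fin 3) ℝ :=
        (1 / θ) • !![pρ / ρ, 0, 0; 0, ρ, 0; 0, 0, eθ * ρ / θ]
      let A : Matrix (Fin 3) (Fin 3) ℝ :=
        (1 / θ) • !![pρ * u / ρ, pρ, 0; β, ρ * u, pθ; 0, pθ, ρ * u * eθ / θ]
      let B : Matrix (Fin 3) (Fin 3) ℝ :=
        (1 / θ) • !![0, 0, 0; 0, μ, 0; 0, 0, α / θ]
      S.IsSymm ∧ S.PosDef ∧
        (S * A0).IsSymm ∧ (S * A0).PosDef ∧
        (S * A).IsSymm ∧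
        (S * (ξ ^ 2 • B)).IsSymm ∧ (S * (ξ ^ 2 • B)).PosSemidef := by
  intro ξ β S A0 A B
  have hβ : 0 < β := by positivity
  have hS : S = diagonal ![β / pρ, 1, 1] := by
    ext i j
    fin_cases i <;> fin_cases j <;> simp [S, diagonal, Matrix.vecHead, Matrix.vecTail]
  have hSA0 : S * A0 = diagonal ![β / ρ / θ, ρ / θ, eθ * ρ / θ ^ 2] := by
    ext i j
    fin_cases i <;> fin_cases j <;>
      simp [S, A0, diagonal, Matrix.mul_apply, Fin.sum_univ_three, Matrix.vecHead, Matrix.vecTail] <;>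
      field_simp <;> first | tauto | ring1 | (ring_nf; tauto)
  have hSB : S * (ξ ^ 2 • B) = diagonal ![0, ξ ^ 2 * μ / θ, ξ ^ 2 * α / θ ^ 2] := by
    ext i j
    fin_cases i <;> fin_cases j <;>
      simp [S, B, diagonal, Matrix.mul_apply, Fin.sum_univ_three, Matrix.vecHead, Matrix.vecTail] <;>
      field_simp <;> first | tauto | ring1 | (ring_nf; tauto)
  refine ⟨?_, ?_, ?_, ?_, ?_, ?_, ?_⟩
  · rw [hS]; exact isSymm_diagonal _
  · rw [hS]
    refine posDef_diagonal_iff.mpr fun i => ?_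
    fin_cases i <;> simp <;> positivity
  · rw [hSA0]; exact isSymm_diagonal _
  · rw [hSA0]
    refine posDef_diagonal_iff.mpr fun i => ?_
    fin_cases i <;> simp <;> positivity
  · unfold Matrix.IsSymm
    ext i j
    fin_cases i <;> fin_cases j <;>
      simp [S, A, Matrix.mul_apply, Fin.sum_univ_three, Matrix.transpose_apply, Matrix.vecHead, Matrix.vecTail] <;>
      field_simp <;> first | tauto | ring1 | (ring_nf; tauto)
  · rw [hSB]; exact isSymm_diagonal _
  · rw [hSB]
    refine posSemidef_diagonal_iff.mpr fun i => ?_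
    fin_cases i <;> simp <;> positivity
end

section
/- There is no symmetric positive definite real 3×3 matrix S such that the four matrices S·A⁰, S·A(0), S·B and S·C are all symmetric. (Hence the linearized Navier–Stokes–Fourier–Korteweg system is not symmetrizable in the classical sense of Friedrichs.) -/
/-! Only the capillarity term matters: `C` is a nonzero multiple of the matrix unit `E₁₀`, and
`S * E₁₀` is symmetric only if `S₁₁ = 0`, which a positive definite `S` excludes. -/

open Matrix

namespace Matrix

variable {n R : Type*} [Fintype n] [DecidableEq n]

theorem IsSymm.diag_mul_eq_zero_of_mul_single [NonUnitalNonAssocSemiring R] {S : Matrix n n R}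
    {i j : n} {c : R} (hij : i ≠ j) (h : (S * single i j c).IsSymm) : S i i * c = 0 := by
  rw [← mul_single_apply_same c i j i S, ← h.apply i j, mul_single_apply_of_ne c i j j i hij]

theorem PosDef.not_isSymm_mul_single [Ring R] [PartialOrder R] [StarRing R] [NoZeroDivisors R]
    [Nontrivial R] {S : Matrix n n R} (hS : S.PosDef) {i j : n} {c : R} (hij : i ≠ j)
    (hc : c ≠ 0) : ¬ (S * single i j c).IsSymm := fun h =>
  (mul_ne_zero hS.diag_pos.ne' hc) (h.diag_mul_eq_zero_of_mul_single hij)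

end Matrix

theorem nsfk_not_friedrichs_symmetrizable_general (ρ θ pρ pθ eθ k μ α u : ℝ)
    (hρ : 0 < ρ) (hθ : 0 < θ)
    (hk : 0 < k) :
    let A0 : Matrix (Fin 3) (Fin 3) ℝ :=
      (1 / θ) • !![pρ / ρ, 0, 0; 0, ρ, 0; 0, 0, eθ * ρ / θ]
    let A : Matrix (Fin 3) (Fin 3) ℝ :=
      (1 / θ) • !![pρ * u / ρ, pρ, 0; pρ + (0:ℝ) ^ 2 * k * ρ, ρ * u, pθ; 0, pθ, ρ * u * eθ / θ]
    let B : Matrix (Fin 3) (Fin 3) ℝ :=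
      (1 / θ) • !![0, 0, 0; 0, μ, 0; 0, 0, α / θ]
    let C : Matrix (Fin 3) (Fin 3) ℝ :=
      (1 / θ) • !![0, 0, 0; k * ρ, 0, 0; 0, 0, 0]
    ¬ ∃ S : Matrix (Fin 3) (Fin 3) ℝ, S.IsSymm ∧ S.PosDef ∧
        (S * A0).IsSymm ∧ (S * A).IsSymm ∧ (S * B).IsSymm ∧ (S * C).IsSymm := by
  intro A0 A B C
  rintro ⟨S, -, hS, -, -, -, hSC⟩
  have hC : C = single 1 0 (k * ρ / θ) := by
    ext a b
    fin_cases a <;> fin_cases b <;> simp [C, single, div_eq_inv_mul]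
  rw [hC] at hSC
  exact hS.not_isSymm_mul_single (by decide) (by positivity) hSC

/-- The linearized Navier–Stokes–Fourier–Korteweg system is not symmetrizable in the
classical sense of Friedrichs: there is no symmetric positive definite `S` making
`S·A⁰`, `S·A(0)`, `S·B` and `S·C` all symmetric. -/
theorem nsfk_not_friedrichs_symmetrizable (ρ θ pρ pθ eθ k μ α u : ℝ)
    (hρ : 0 < ρ) (hθ : 0 < θ) (hpρ : 0 < pρ) (hpθ : 0 < pθ) (heθ : 0 < eθ)
    (hk : 0 < k) (hμ : 0 < μ) (hα : 0 < α) :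
    let A0 : Matrix (Fin 3) (Fin 3) ℝ :=
      (1 / θ) • !![pρ / ρ, 0, 0; 0, ρ, 0; 0, 0, eθ * ρ / θ]
    let A : Matrix (Fin 3) (Fin 3) ℝ :=
      (1 / θ) • !![pρ * u / ρ, pρ, 0; pρ + (0:ℝ) ^ 2 * k * ρ, ρ * u, pθ; 0, pθ, ρ * u * eθ / θ]
    let B : Matrix (Fin 3) (Fin 3) ℝ :=
      (1 / θ) • !![0, 0, 0; 0, μ, 0; 0, 0, α / θ]
    let C : Matrix (Fin 3) (Fin 3) ℝ :=
      (1 / θ) • !![0, 0, 0; k * ρ, 0, 0; 0, 0, 0]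
    ¬ ∃ S : Matrix (Fin 3) (Fin 3) ℝ, S.IsSymm ∧ S.PosDef ∧
        (S * A0).IsSymm ∧ (S * A).IsSymm ∧ (S * B).IsSymm ∧ (S * C).IsSymm :=
  nsfk_not_friedrichs_symmetrizable_general ρ θ pρ pθ eθ k μ α u hρ hθ hk
end

section
/- The triplet (I, Ã(ξ), B̃) is genuinely coupled: for every ξ ∈ ℝ, every nonzero vector V ∈ ℝ³ with B̃·V = 0, and every ϱ ∈ ℝ, one has (ϱ·I + Ã(ξ))·V ≠ 0. -/
open Matrix

/-- The triplet `(I, Ã(ξ), B̃)` is genuinely coupled: for every `ξ`, every nonzero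
`V ∈ ℝ³` with `B̃·V = 0`, and every `ϱ ∈ ℝ`, one has `(ϱ·I + Ã(ξ))·V ≠ 0`. -/
theorem nsfk_tilde_genuinely_coupled (ρ θ pρ pθ eθ k μ α u : ℝ)
    (hρ : 0 < ρ) (hθ : 0 < θ) (hpρ : 0 < pρ) (hpθ : 0 < pθ) (heθ : 0 < eθ)
    (hk : 0 < k) (hμ : 0 < μ) (hα : 0 < α) :
    ∀ ξ : ℝ,
      let β : ℝ := pρ + ξ ^ 2 * k * ρ
      let c : ℝ := pθ * Real.sqrt θ / (Real.sqrt eθ * ρ)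
      let Atilde : Matrix (Fin 3) (Fin 3) ℝ :=
        !![u, Real.sqrt β, 0; Real.sqrt β, u, c; 0, c, u]
      let Btilde : Matrix (Fin 3) (Fin 3) ℝ :=
        !![0, 0, 0; 0, μ / ρ, 0; 0, 0, α / (eθ * ρ)]
      ∀ V : Fin 3 → ℝ, V ≠ 0 → Btilde.mulVec V = 0 →
        ∀ ϱ : ℝ, (ϱ • (1 : Matrix (Fin 3) (Fin 3) ℝ) + Atilde).mulVec V ≠ 0 := by
  intro ξ β c Atilde Btilde V hV hBV ϱ h
  have hβ : 0 < β := by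
    have : 0 ≤ ξ ^ 2 * k * ρ := by positivity
    simp only [β]; linarith
  have hsβ : 0 < Real.sqrt β := Real.sqrt_pos.mpr hβ
  have hB1 := congrFun hBV 1
  have hB2 := congrFun hBV 2
  simp [Btilde, Matrix.mulVec, dotProduct, Fin.sum_univ_three, hμ.ne', hρ.ne', hα.ne', heθ.ne'] at hB1 hB2
  have hV1 : V 1 = 0 := hB1
  have hV2 : V 2 = 0 := hB2
  have hV0 : V 0 ≠ 0 := by
    intro h0
    apply hV
    funext i
    fin_cases i <;> simp [h0, hV1, hV2]
  have h1 := congrFun h 1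
  simp [Atilde, Matrix.mulVec, dotProduct, Fin.sum_univ_three,
    Matrix.add_apply, Matrix.smul_apply, Matrix.one_apply, hV1, hV2] at h1
  rcases h1 with h' | h'
  · exact hsβ.ne' h'
  · exact hV0 h'
end

section
/- The linear Korteweg operator satisfies the genuine coupling condition: for every ξ ∈ ℝ with ξ ≠ 0, every nonzero vector V ∈ ℝ³ with B·V = 0 (equivalently ξ²·B·V = 0), and every ϱ ∈ ℝ, one has (ϱ·A⁰ + A(ξ))·V ≠ 0. -/
open Matrix

/-- The linear Korteweg operator satisfies the genuine coupling condition: for every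
`ξ ≠ 0`, every nonzero `V ∈ ℝ³` with `B·V = 0`, and every `ϱ ∈ ℝ`, one has
`(ϱ·A⁰ + A(ξ))·V ≠ 0`. -/
theorem nsfk_genuinely_coupled (ρ θ pρ pθ eθ k μ α u : ℝ)
    (hρ : 0 < ρ) (hθ : 0 < θ) (hpρ : 0 < pρ) (hpθ : 0 < pθ) (heθ : 0 < eθ)
    (hk : 0 < k) (hμ : 0 < μ) (hα : 0 < α) :
    ∀ ξ : ℝ, ξ ≠ 0 →
      let β : ℝ := pρ + ξ ^ 2 * k * ρ
      let A0 : Matrix (Fin 3) (Fin 3) ℝ :=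
        (1 / θ) • !![pρ / ρ, 0, 0; 0, ρ, 0; 0, 0, eθ * ρ / θ]
      let A : Matrix (Fin 3) (Fin 3) ℝ :=
        (1 / θ) • !![pρ * u / ρ, pρ, 0; β, ρ * u, pθ; 0, pθ, ρ * u * eθ / θ]
      let B : Matrix (Fin 3) (Fin 3) ℝ :=
        (1 / θ) • !![0, 0, 0; 0, μ, 0; 0, 0, α / θ]
      ∀ V : Fin 3 → ℝ, V ≠ 0 → B.mulVec V = 0 →
        ∀ ϱ : ℝ, (ϱ • A0 + A).mulVec V ≠ 0 := by
  intro ξ hξ β A0 A B V hV hBV ϱ hc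
  have hθ' : θ ≠ 0 := ne_of_gt hθ
  -- From B·V = 0 deduce V 1 = 0 and V 2 = 0
  have h1 : V 1 = 0 := by
    have := congrFun hBV 1
    simp [B, Matrix.mulVec, dotProduct, Fin.sum_univ_three] at this
    rcases this with (h | h) | h
    · exact absurd h hθ'
    · exact absurd h (ne_of_gt hμ)
    · exact h
  have h2 : V 2 = 0 := by
    have := congrFun hBV 2
    simp [B, Matrix.mulVec, dotProduct, Fin.sum_univ_three] at this
    rcases this with (h | h) | h
    · exact absurd h hθ'
    · rcases h with h | h
      · exact absurd h (ne_of_gt hα)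
      · exact absurd h hθ'
    · exact h
  have h0 : V 0 ≠ 0 := by
    intro h0
    apply hV
    funext i
    fin_cases i <;> simp [h0, h1, h2]
  -- Row 1 of (ϱ•A0 + A)·V = 0 gives β * V 0 = 0
  have hβ : 0 < β := by positivity
  have := congrFun hc 1
  simp [A0, A, Matrix.mulVec, dotProduct, Fin.sum_univ_three, h1, h2] at this
  rcases this with (h | h) | h
  · exact hθ' h
  · exact (ne_of_gt hβ) h
  · exact h0 h
end

section
/- There exist constants ε > 0, γ̄ > 0 and C > 0 such that, defining for each ξ ∈ ℝ the matrix K̃(ξ) := (ε/√β(ξ))·[[0, 1, 0],[−1, 0, c̄/√β(ξ)],[0, −c̄/√β(ξ), 0]], the following hold for every ξ ∈ ℝ: (i) K̃(ξ) is skew-symmetric; (ii) for every v ∈ ℝ³, ⟨v, (½·(K̃(ξ)·Ã(ξ) + (K̃(ξ)·Ã(ξ))ᵀ) + B̃)·v⟩ ≥ γ̄·|v|²; (iii) ‖K̃(ξ)‖ ≤ C and |ξ|·‖K̃(ξ)‖ ≤ C. (Thus K̃ is a compensating matrix symbol for the triplet (I, Ã(ξ), B̃) with a bound γ̄ uniform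 in ξ.) -/
set_option maxHeartbeats 1000000


open Matrix

attribute [local instance] Matrix.normedAddCommGroup

/-- Existence of a compensating matrix symbol `K̃(ξ)` for the triplet `(I, Ã(ξ), B̃)`:
`K̃(ξ)` is skew-symmetric, `[K̃(ξ)Ã(ξ)]ˢ + B̃ ≥ γ̄·I` with `γ̄ > 0` uniform in `ξ`, and
both `‖K̃(ξ)‖` and `|ξ|·‖K̃(ξ)‖` are uniformly bounded. -/
theorem nsfk_compensating_matrix_symbol (ρ θ pρ pθ eθ k μ α u : ℝ)
    (hρ : 0 < ρ) (hθ : 0 < θ) (hpρ : 0 < pρ) (hpθ : 0 < pθ) (heθ : 0 < eθ)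
    (hk : 0 < k) (hμ : 0 < μ) (hα : 0 < α) :
    ∃ ε : ℝ, 0 < ε ∧ ∃ γ : ℝ, 0 < γ ∧ ∃ C : ℝ, 0 < C ∧
      ∀ ξ : ℝ,
        let β : ℝ := pρ + ξ ^ 2 * k * ρ
        let c : ℝ := pθ * Real.sqrt θ / (Real.sqrt eθ * ρ)
        let Atilde : Matrix (Fin 3) (Fin 3) ℝ :=
          !![u, Real.sqrt β, 0; Real.sqrt β, u, c; 0, c, u]
        let Btilde : Matrix (Fin 3) (Fin 3) ℝ :=
          !![0, 0, 0; 0, μ / ρ, 0; 0, 0, α / (eθ * ρ)]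
        let Ktilde : Matrix (Fin 3) (Fin 3) ℝ :=
          (ε / Real.sqrt β) •
            !![0, 1, 0; -1, 0, c / Real.sqrt β; 0, -(c / Real.sqrt β), 0]
        Ktildeᵀ = -Ktilde ∧
          (∀ v : Fin 3 → ℝ,
              γ * (v ⬝ᵥ v) ≤
                v ⬝ᵥ ((((1 : ℝ) / 2) • (Ktilde * Atilde + (Ktilde * Atilde)ᵀ) +
                    Btilde).mulVec v)) ∧
          ‖Ktilde‖ ≤ C ∧ |ξ| * ‖Ktilde‖ ≤ C := by
  have hc : 0 < pθ * Real.sqrt θ / (Real.sqrt eθ * ρ) := by positivity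
  set c₀ : ℝ := pθ * Real.sqrt θ / (Real.sqrt eθ * ρ) with hc₀
  clear_value c₀
  clear hc₀
  set Q : ℝ := c₀ ^ 2 / pρ with hQdef
  have hQ0 : 0 ≤ Q := by positivity
  set ε : ℝ := min (μ / (2 * ρ)) (α / (2 * (eθ * ρ * (Q + 1)))) with hεdef
  have hε0 : 0 < ε := lt_min (by positivity) (by positivity)
  set C : ℝ := ε / Real.sqrt pρ + ε * c₀ / pρ + ε / Real.sqrt (k * ρ)
      + ε * c₀ / (Real.sqrt pρ * Real.sqrt (k * ρ)) with hCdef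
  have hC0 : 0 < C := by positivity
  refine ⟨ε, hε0, ε, hε0, C, hC0, fun ξ => ?_⟩
  dsimp only
  have hβ : 0 < pρ + ξ ^ 2 * k * ρ := by positivity
  set s : ℝ := Real.sqrt (pρ + ξ ^ 2 * k * ρ) with hsdef
  have hs : 0 < s := Real.sqrt_pos.mpr hβ
  have hs2 : s ^ 2 = pρ + ξ ^ 2 * k * ρ := Real.sq_sqrt hβ.le
  have hpρs : pρ ≤ s ^ 2 := by rw [hs2]; nlinarith [sq_nonneg ξ, mul_pos hk hρ, sq_nonneg (ξ * k)]
  have hxk : |ξ| * Real.sqrt (k * ρ) ≤ s := by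
    rw [hsdef, ← Real.sqrt_sq_eq_abs, ← Real.sqrt_mul (sq_nonneg ξ)]
    apply Real.sqrt_le_sqrt
    nlinarith
  have hsp : Real.sqrt pρ ≤ s := by
    rw [hsdef]
    exact Real.sqrt_le_sqrt (by nlinarith [sq_nonneg ξ, mul_pos hk hρ, sq_nonneg (ξ * k)])
  clear_value s
  refine ⟨?_, ?_, ?_, ?_⟩
  · ext i j
    fin_cases i <;> fin_cases j <;> simp
  · -- quadratic form
    have hKA : ((ε / s) •
          !![0, 1, 0; -1, 0, c₀ / s; 0, -(c₀ / s), 0] : Matrix (Fin 3) (Fin 3) ℝ) *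
          !![u, s, 0; s, u, c₀; 0, c₀, u] = !![ε, ε * u / s, ε * c₀ / s;
        -(ε * u / s), -ε + ε * c₀ ^ 2 / s ^ 2, ε * c₀ * u / s ^ 2;
        -(ε * c₀ / s), -(ε * c₀ * u / s ^ 2), -(ε * c₀ ^ 2 / s ^ 2)] := by
      ext i j
      fin_cases i <;> fin_cases j <;>
        simp [Matrix.mul_apply, Fin.sum_univ_three] <;>
        (try field_simp; try ring; try tauto)
    rw [hKA]
    have hM : (((1 : ℝ) / 2) • ((!![ε, ε * u / s, ε * c₀ / s;
        -(ε * u / s), -ε + ε * c₀ ^ 2 / s ^ 2, ε * c₀ * u / s ^ 2;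
        -(ε * c₀ / s), -(ε * c₀ * u / s ^ 2), -(ε * c₀ ^ 2 / s ^ 2)] : Matrix (Fin 3) (Fin 3) ℝ)
          + !![ε, ε * u / s, ε * c₀ / s;
        -(ε * u / s), -ε + ε * c₀ ^ 2 / s ^ 2, ε * c₀ * u / s ^ 2;
        -(ε * c₀ / s), -(ε * c₀ * u / s ^ 2), -(ε * c₀ ^ 2 / s ^ 2)]ᵀ)
          + !![0, 0, 0; 0, μ / ρ, 0; 0, 0, α / (eθ * ρ)]) =
        !![ε, 0, 0; 0, μ / ρ - ε + ε * c₀ ^ 2 / s ^ 2, 0;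
           0, 0, α / (eθ * ρ) - ε * c₀ ^ 2 / s ^ 2] := by
      ext i j
      fin_cases i <;> fin_cases j <;> simp [Matrix.transpose_apply, Matrix.vecHead, Matrix.vecTail] <;> ring
    rw [hM]
    intro v
    simp [Matrix.mulVec, dotProduct, Fin.sum_univ_three, Matrix.vecHead, Matrix.vecTail]
    have key1 : ε ≤ μ / ρ - ε + ε * c₀ ^ 2 / s ^ 2 := by
      have h1 : ε ≤ μ / (2 * ρ) := min_le_left _ _
      have h2 : (0:ℝ) ≤ ε * c₀ ^ 2 / s ^ 2 := by positivity
      have h3 : μ / (2 * ρ) = (μ / ρ) / 2 := by ring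
      linarith
    have key2 : ε ≤ α / (eθ * ρ) - ε * c₀ ^ 2 / s ^ 2 := by
      have h1 : ε ≤ α / (2 * (eθ * ρ * (Q + 1))) := min_le_right _ _
      have h2 : ε * c₀ ^ 2 / s ^ 2 ≤ ε * c₀ ^ 2 / pρ := by gcongr
      have h3 : ε * c₀ ^ 2 / pρ = ε * Q := by rw [hQdef]; ring
      have h4 : ε * (Q + 1) ≤ (α / (2 * (eθ * ρ * (Q + 1)))) * (Q + 1) :=
        mul_le_mul_of_nonneg_right h1 (by linarith)
      have h5 : (α / (2 * (eθ * ρ * (Q + 1)))) * (Q + 1) = α / (2 * (eθ * ρ)) := by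
        field_simp
      have h6 : α / (2 * (eθ * ρ)) = (α / (eθ * ρ)) / 2 := by ring
      have h7 : (0:ℝ) < α / (eθ * ρ) := by positivity
      nlinarith
    nlinarith [sq_nonneg (v 0), sq_nonneg (v 1), sq_nonneg (v 2),
      mul_le_mul_of_nonneg_right key1 (sq_nonneg (v 1)),
      mul_le_mul_of_nonneg_right key2 (sq_nonneg (v 2))]
  · -- norm bound
    rw [Matrix.norm_le_iff hC0.le]
    have b1 : ε / s ≤ C := by
      have h1 : ε / s ≤ ε / Real.sqrt pρ := by gcongr <;> positivity
      have h2 : (0:ℝ) ≤ ε * c₀ / pρ := by positivity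
      have h3 : (0:ℝ) ≤ ε / Real.sqrt (k * ρ) := by positivity
      have h4 : (0:ℝ) ≤ ε * c₀ / (Real.sqrt pρ * Real.sqrt (k * ρ)) := by positivity
      rw [hCdef]; linarith
    have b2 : ε / s * (c₀ / s) ≤ C := by
      have h0 : ε / s * (c₀ / s) = ε * c₀ / s ^ 2 := by ring
      have h1 : ε * c₀ / s ^ 2 ≤ ε * c₀ / pρ := by gcongr
      have h2 : (0:ℝ) ≤ ε / Real.sqrt pρ := by positivity
      have h3 : (0:ℝ) ≤ ε / Real.sqrt (k * ρ) := by positivity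
      have h4 : (0:ℝ) ≤ ε * c₀ / (Real.sqrt pρ * Real.sqrt (k * ρ)) := by positivity
      rw [h0, hCdef]; linarith
    intro i j
    fin_cases i <;> fin_cases j <;>
      simp [Real.norm_eq_abs, abs_mul, abs_div, abs_of_pos hε0, abs_of_pos hs,
        abs_of_pos hc] <;>
      first
        | exact hC0.le
        | exact b1
        | exact b2
        | (rw [abs_of_pos (by positivity : (0:ℝ) < ε / s * (c₀ / s))]; exact b2)
  · -- |ξ| * norm bound
    rcases eq_or_ne ξ 0 with h0 | h0
    · rw [h0]
      simpa using hC0.le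
    · have hξ : 0 < |ξ| := abs_pos.mpr h0
      have hkρ : 0 < Real.sqrt (k * ρ) := Real.sqrt_pos.mpr (by positivity)
      have hpρ' : 0 < Real.sqrt pρ := Real.sqrt_pos.mpr hpρ
      have hC1 : ε / Real.sqrt (k * ρ) ≤ C := by
        have h2 : (0:ℝ) ≤ ε / Real.sqrt pρ := by positivity
        have h3 : (0:ℝ) ≤ ε * c₀ / pρ := by positivity
        have h4 : (0:ℝ) ≤ ε * c₀ / (Real.sqrt pρ * Real.sqrt (k * ρ)) := by positivity
        rw [hCdef]; linarith
      have hC2 : ε * c₀ / (Real.sqrt pρ * Real.sqrt (k * ρ)) ≤ C := by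
        have h2 : (0:ℝ) ≤ ε / Real.sqrt pρ := by positivity
        have h3 : (0:ℝ) ≤ ε * c₀ / pρ := by positivity
        have h4 : (0:ℝ) ≤ ε / Real.sqrt (k * ρ) := by positivity
        rw [hCdef]; linarith
      have b3 : ε / s ≤ C / |ξ| := by
        rw [div_le_div_iff₀ hs hξ]
        calc ε * |ξ| = ε / Real.sqrt (k * ρ) * (|ξ| * Real.sqrt (k * ρ)) := by
              field_simp
          _ ≤ C * s := mul_le_mul hC1 hxk (by positivity) hC0.le
      have b4 : ε / s * (c₀ / s) ≤ C / |ξ| := by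
        have h0' : ε / s * (c₀ / s) = ε * c₀ / s ^ 2 := by ring
        rw [h0', div_le_div_iff₀ (by positivity) hξ]
        have hss2 : Real.sqrt pρ * (|ξ| * Real.sqrt (k * ρ)) ≤ s ^ 2 := by
          rw [pow_two]; exact mul_le_mul hsp hxk (by positivity) hs.le
        calc ε * c₀ * |ξ|
            = ε * c₀ / (Real.sqrt pρ * Real.sqrt (k * ρ)) *
                (Real.sqrt pρ * (|ξ| * Real.sqrt (k * ρ))) := by
              field_simp
          _ ≤ C * s ^ 2 := mul_le_mul hC2 hss2 (by positivity) hC0.le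
      rw [mul_comm, ← le_div_iff₀ hξ]
      rw [Matrix.norm_le_iff (by positivity)]
      intro i j
      fin_cases i <;> fin_cases j <;>
        simp [Real.norm_eq_abs, abs_mul, abs_div, abs_of_pos hε0, abs_of_pos hs,
          abs_of_pos hc] <;>
        first
          | positivity
          | exact b3
          | exact b4
          | (rw [abs_of_pos (by positivity : (0:ℝ) < ε / s * (c₀ / s))]; exact b4)
end

section
/- Basic energy estimate: there exist constants C > 0 and c₀ > 0 such that for every ξ ∈ ℝ and every differentiable function V : [0,∞) → ℂ³ satisfying the linear ODE V'(t) = −(i·ξ·Ã(ξ) + ξ²·B̃)·V(t) for all t ≥ 0 (the real matrices acting on ℂ³ by complexification), one has |V(t)| ≤ C·exp(−c₀·ξ²·t)·|V(0)| for all t ≥ 0; the constants C and c₀ are independent of ξ and of V. -/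
/-!
The plain energy `∑ |V i|²` only sees the damped components: its derivative is
`-2ξ²(μ/ρ |V 1|² + α/(eθ ρ) |V 2|²)`. Following Kawashima, add the compensating term
`κ Im(conj (V 0) * V 1)` with `κ = δ ξ / √β`: the coupling `√β` between `V 0` and `V 1` makes its
derivative contribute `-δ ξ² |V 0|²`, and for `δ` small the modified energy is comparable to
`∑ |V i|²` and satisfies `E' ≤ -(δ/3) ξ² E`, so Grönwall gives the decay.
The constants do not depend on `ξ` because the capillarity term gives `β ≥ k ρ ξ²`, so
`ξ / √β` stays bounded, while `c / √β ≤ c / √pρ`.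
-/

open Matrix ComplexConjugate Filter Topology

theorem le_mul_exp_of_hasDerivAt_le_neg_mul {E E' : ℝ → ℝ} {γ t : ℝ}
    (hE : ∀ τ, 0 ≤ τ → HasDerivAt E (E' τ) τ) (hE' : ∀ τ, 0 ≤ τ → E' τ ≤ -γ * E τ)
    (ht : 0 ≤ t) : E t ≤ E 0 * Real.exp (-γ * t) := by
  have h := le_gronwallBound_of_liminf_deriv_right_le (K := -γ) (ε := 0) (b := t)
    (fun τ hτ => (hE τ hτ.1).continuousAt.continuousWithinAt)
    (fun τ hτ _ hr => (hE τ hτ.1).hasDerivWithinAt.liminf_right_slope_le hr) le_rfl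
    (fun τ hτ => (hE' τ hτ.1).trans_eq (add_zero _).symm) t ⟨ht, le_rfl⟩
  simpa [gronwallBound_ε0] using h

theorem eventually_nhds_zero_mul_lt {f : ℝ → ℝ} (hf : Continuous f) {y : ℝ} (hy : 0 < y) :
    ∀ᶠ δ in 𝓝 0, δ * f δ < y :=
  (continuous_id.mul hf).continuousAt.eventually_lt continuousAt_const (by simpa using hy)

theorem sq_div_sqrt_le {x z w : ℝ} (hz : 0 < z) (h : x ^ 2 ≤ w * z) : (x / √z) ^ 2 ≤ w := by
  rwa [div_pow, Real.sq_sqrt hz.le, div_le_iff₀ hz]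

theorem sq_norm_le_sum_sq_norm {ι E : Type*} [Fintype ι] [SeminormedAddCommGroup E] (f : ι → E) :
    ‖f‖ ^ 2 ≤ ∑ i, ‖f i‖ ^ 2 := by
  have hsum := Finset.sum_nonneg (s := Finset.univ) fun i _ => sq_nonneg ‖f i‖
  have : ‖f‖ ≤ √(∑ i, ‖f i‖ ^ 2) := (pi_norm_le_iff_of_nonneg (Real.sqrt_nonneg _)).2 fun i =>
    Real.le_sqrt_of_sq_le (Finset.single_le_sum (fun j _ => sq_nonneg ‖f j‖) (Finset.mem_univ i))
  calc ‖f‖ ^ 2 ≤ √(∑ i, ‖f i‖ ^ 2) ^ 2 := by gcongr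
    _ = _ := Real.sq_sqrt hsum

theorem sum_sq_norm_le_card_mul {ι E : Type*} [Fintype ι] [SeminormedAddCommGroup E] (f : ι → E) :
    ∑ i, ‖f i‖ ^ 2 ≤ Fintype.card ι * ‖f‖ ^ 2 := by
  simpa using Finset.sum_le_card_nsmul Finset.univ (fun i => ‖f i‖ ^ 2) (‖f‖ ^ 2)
    fun i _ => by gcongr; exact norm_le_pi_norm f i

theorem abs_mul_le_add_sq {e x p q : ℝ} (hx : |x| ≤ p * q) : |e * x| ≤ p ^ 2 / 4 + e ^ 2 * q ^ 2 := by
  rw [abs_mul]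
  nlinarith [sq_nonneg (p / 2 - |e| * q), abs_nonneg e, sq_abs e]

namespace NSFK

/-- `iξÃ(ξ) + ξ²B̃` with `b = √β(ξ)`, `m = μ/ρ`, `a = α/(eθ ρ)`. -/
noncomputable def symbol (ξ u b c m a : ℝ) : Matrix (Fin 3) (Fin 3) ℂ :=
  (Complex.I * ξ) • (!![u, b, 0; b, u, c; 0, c, u]).map (fun x : ℝ => (x : ℂ)) +
    ((ξ : ℂ) ^ 2) • (!![0, 0, 0; 0, m, 0; 0, 0, a]).map (fun x : ℝ => (x : ℂ))

noncomputable def energy (κ : ℝ) (z : Fin 3 → ℂ) : ℝ :=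
  ∑ i, ‖z i‖ ^ 2 + κ * (conj (z 0) * z 1).im

noncomputable def dissipation (m a δ e₁ e₂ : ℝ) (z : Fin 3 → ℂ) : ℝ :=
  2 * m * ‖z 1‖ ^ 2 + 2 * a * ‖z 2‖ ^ 2 + δ * (‖z 0‖ ^ 2 - ‖z 1‖ ^ 2) +
    δ * (e₁ * (conj (z 0) * z 2).re + e₂ * (conj (z 0) * z 1).im)

theorem hasDerivAt_energy {κ t : ℝ} {V : ℝ → Fin 3 → ℂ} {V' : Fin 3 → ℂ}
    (hV : HasDerivAt V V' t) :
    HasDerivAt (fun s => energy κ (V s))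
      (∑ i, 2 * inner ℝ (V t i) (V' i) + κ * (conj (V' 0) * V t 1 + conj (V t 0) * V' 1).im) t := by
  have hVi := hasDerivAt_pi.1 hV
  exact (HasDerivAt.fun_sum fun i _ => (hVi i).norm_sq).add
    ((Complex.imCLM.hasFDerivAt.comp_hasDerivAt t ((hVi 0).star.mul (hVi 1))).const_mul κ)

theorem hasDerivAt_energy_of_hasDerivAt_symbol {ξ u b c m a δ t : ℝ} (hb : b ≠ 0)
    {V : ℝ → Fin 3 → ℂ} (hV : HasDerivAt V (-(symbol ξ u b c m a *ᵥ V t)) t) :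
    HasDerivAt (fun s => energy (δ * ξ / b) (V s))
      (-ξ ^ 2 * dissipation m a δ (c / b) (ξ * m / b) (V t)) t := by
  refine (hasDerivAt_energy hV).congr_deriv ?_
  simp only [symbol, ← Complex.ofReal_pow, Complex.coe_smul, Pi.neg_apply, mulVec, dotProduct,
    Matrix.add_apply, Matrix.smul_apply, map_apply, of_apply, cons_val', cons_val_fin_one, smul_eq_mul,
    Complex.real_smul, Fin.sum_univ_three, Fin.isValue, cons_val_zero, cons_val_one, cons_val,
    neg_add_rev, Complex.inner, Complex.mul_re, Complex.add_re, Complex.neg_re, Complex.I_re,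
    Complex.ofReal_re, zero_mul, Complex.I_im, Complex.ofReal_im, mul_zero, sub_self, Complex.mul_im,
    one_mul, zero_add, sub_zero, Complex.add_im, add_zero, neg_sub, Complex.conj_re, Complex.neg_im,
    Complex.conj_im, mul_neg, sub_neg_eq_add, neg_zero, Complex.ofReal_zero, map_add, map_neg, map_mul,
    Complex.conj_I, Complex.conj_ofReal, neg_mul, neg_neg, zero_sub, dissipation, Complex.sq_norm,
    Complex.normSq_apply]
  field_simp
  ring

theorem abs_energy_sub_le {κ : ℝ} (hκ : κ ^ 2 ≤ 1) (z : Fin 3 → ℂ) :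
    |energy κ z - ∑ i, ‖z i‖ ^ 2| ≤ (∑ i, ‖z i‖ ^ 2) / 2 := by
  have hy : |(conj (z 0) * z 1).im| ≤ ‖z 0‖ * ‖z 1‖ :=
    (Complex.abs_im_le_norm _).trans_eq (by simp)
  have hκ' : |κ| ≤ 1 := (sq_le_one_iff_abs_le_one κ).1 hκ
  rw [energy, add_sub_cancel_left, abs_mul, Fin.sum_univ_three]
  nlinarith [mul_le_mul hκ' hy (abs_nonneg _) zero_le_one, sq_nonneg (‖z 0‖ - ‖z 1‖),
    sq_nonneg ‖z 2‖]

theorem half_mul_sum_le_dissipation {m a δ e₁ e₂ : ℝ} (hδ : 0 ≤ δ)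
    (hm : δ * (3 / 2 + e₂ ^ 2) ≤ 2 * m) (ha : δ * (1 / 2 + e₁ ^ 2) ≤ 2 * a) (z : Fin 3 → ℂ) :
    δ / 2 * ∑ i, ‖z i‖ ^ 2 ≤ dissipation m a δ e₁ e₂ z := by
  have hx := abs_le.1 <| abs_mul_le_add_sq (e := e₁) (p := ‖z 0‖) (q := ‖z 2‖) <|
    (Complex.abs_re_le_norm (conj (z 0) * z 2)).trans_eq (by simp)
  have hy := abs_le.1 <| abs_mul_le_add_sq (e := e₂) (p := ‖z 0‖) (q := ‖z 1‖) <|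
    (Complex.abs_im_le_norm (conj (z 0) * z 1)).trans_eq (by simp)
  rw [dissipation, Fin.sum_univ_three]
  nlinarith [mul_le_mul_of_nonneg_left hx.1 hδ, mul_le_mul_of_nonneg_left hy.1 hδ,
    mul_le_mul_of_nonneg_right hm (sq_nonneg ‖z 1‖),
    mul_le_mul_of_nonneg_right ha (sq_nonneg ‖z 2‖)]

theorem norm_le_of_hasDerivAt_symbol {ξ u b c m a δ : ℝ} (hb : b ≠ 0) (hδ : 0 ≤ δ)
    (hκ : (δ * ξ / b) ^ 2 ≤ 1) (hm : δ * (3 / 2 + (ξ * m / b) ^ 2) ≤ 2 * m)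
    (ha : δ * (1 / 2 + (c / b) ^ 2) ≤ 2 * a) {V : ℝ → Fin 3 → ℂ}
    (hV : ∀ t, 0 ≤ t → HasDerivAt V (-(symbol ξ u b c m a *ᵥ V t)) t) {t : ℝ} (ht : 0 ≤ t) :
    ‖V t‖ ≤ 3 * Real.exp (-(δ / 6) * ξ ^ 2 * t) * ‖V 0‖ := by
  set κ := δ * ξ / b
  have hequiv := fun s => abs_le.1 (abs_energy_sub_le hκ (V s))
  have hE : energy κ (V t) ≤ energy κ (V 0) * Real.exp (-(δ / 3 * ξ ^ 2) * t) := by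
    refine le_mul_exp_of_hasDerivAt_le_neg_mul
      (fun τ hτ => hasDerivAt_energy_of_hasDerivAt_symbol hb (hV τ hτ)) (fun τ _ => ?_) ht
    have : δ / 3 * energy κ (V τ) ≤ dissipation m a δ (c / b) (ξ * m / b) (V τ) := by
      nlinarith [half_mul_sum_le_dissipation hδ hm ha (V τ), (hequiv τ).2]
    nlinarith [mul_le_mul_of_nonneg_left this (sq_nonneg ξ)]
  have hexp : Real.exp (-(δ / 3 * ξ ^ 2) * t) = Real.exp (-(δ / 6) * ξ ^ 2 * t) ^ 2 := by
    rw [← Real.exp_nat_mul]; ring_nf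
  have h : ‖V t‖ ^ 2 ≤ (3 * Real.exp (-(δ / 6) * ξ ^ 2 * t) * ‖V 0‖) ^ 2 := calc
    ‖V t‖ ^ 2 ≤ ∑ i, ‖V t i‖ ^ 2 := sq_norm_le_sum_sq_norm _
    _ ≤ 2 * energy κ (V t) := by linarith [(hequiv t).1]
    _ ≤ 2 * (energy κ (V 0) * Real.exp (-(δ / 3 * ξ ^ 2) * t)) := by gcongr
    _ ≤ 2 * ((3 / 2 * ∑ i, ‖V 0 i‖ ^ 2) * Real.exp (-(δ / 3 * ξ ^ 2) * t)) := by
      gcongr; linarith [(hequiv 0).2]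
    _ ≤ 2 * ((3 / 2 * (3 * ‖V 0‖ ^ 2)) * Real.exp (-(δ / 3 * ξ ^ 2) * t)) := by
      gcongr; simpa using sum_sq_norm_le_card_mul (V 0)
    _ = _ := by rw [hexp]; ring
  exact (pow_le_pow_iff_left₀ (norm_nonneg _) (by positivity) two_ne_zero).1 h

end NSFK

theorem nsfk_basic_energy_estimate_general (ρ θ pρ pθ eθ k μ α u : ℝ)
    (hρ : 0 < ρ) (hpρ : 0 < pρ) (heθ : 0 < eθ)
    (hk : 0 < k) (hμ : 0 < μ) (hα : 0 < α) :
    ∃ C : ℝ, 0 < C ∧ ∃ c₀ : ℝ, 0 < c₀ ∧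
      ∀ ξ : ℝ,
        let β : ℝ := pρ + ξ ^ 2 * k * ρ
        let c : ℝ := pθ * Real.sqrt θ / (Real.sqrt eθ * ρ)
        let Atilde : Matrix (Fin 3) (Fin 3) ℂ :=
          (!![u, Real.sqrt β, 0; Real.sqrt β, u, c; 0, c, u]).map
            (fun x : ℝ => (x : ℂ))
        let Btilde : Matrix (Fin 3) (Fin 3) ℂ :=
          (!![0, 0, 0; 0, μ / ρ, 0; 0, 0, α / (eθ * ρ)]).map
            (fun x : ℝ => (x : ℂ))
        ∀ V : ℝ → (Fin 3 → ℂ),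
          (∀ t : ℝ, 0 ≤ t →
            HasDerivAt V
              (-(((Complex.I * (ξ : ℂ)) • Atilde + ((ξ : ℂ) ^ 2) • Btilde).mulVec (V t))) t) →
          ∀ t : ℝ, 0 ≤ t →
            ‖V t‖ ≤ C * Real.exp (-c₀ * ξ ^ 2 * t) * ‖V 0‖ := by
  set c := pθ * Real.sqrt θ / (Real.sqrt eθ * ρ)
  set m := μ / ρ
  set a := α / (eθ * ρ)
  have hsmall : ∀ᶠ δ in 𝓝[>] 0, (δ * (δ * (k * ρ)⁻¹) < 1 ∧
      δ * (3 / 2 + m ^ 2 * (k * ρ)⁻¹) < 2 * m ∧ δ * (1 / 2 + c ^ 2 / pρ) < 2 * a) ∧ 0 < δ :=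
    (((eventually_nhds_zero_mul_lt (by fun_prop) one_pos).and <|
      (eventually_nhds_zero_mul_lt continuous_const (by positivity)).and
        (eventually_nhds_zero_mul_lt continuous_const (by positivity))).filter_mono
      nhdsWithin_le_nhds).and self_mem_nhdsWithin
  obtain ⟨δ, ⟨hδK, hδm, hδa⟩, hδ⟩ := hsmall.exists
  refine ⟨3, by norm_num, δ / 6, by positivity, ?_⟩
  intro ξ β _ _ _ V hV t ht
  have hβ : 0 < β := by positivity
  have hξ : (ξ / √β) ^ 2 ≤ (k * ρ)⁻¹ := sq_div_sqrt_le hβ (by field_simp; nlinarith)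
  have hc : (c / √β) ^ 2 ≤ c ^ 2 / pρ := sq_div_sqrt_le hβ <| by
    field_simp; exact mul_le_mul_of_nonneg_left (le_add_of_nonneg_right (by positivity)) (sq_nonneg c)
  refine NSFK.norm_le_of_hasDerivAt_symbol (Real.sqrt_pos.2 hβ).ne' hδ.le ?_ ?_ ?_ hV ht
  · calc (δ * ξ / √β) ^ 2 = δ * (δ * (ξ / √β) ^ 2) := by ring
      _ ≤ 1 := le_trans (by gcongr) hδK.le
  · calc δ * (3 / 2 + (ξ * m / √β) ^ 2) = δ * (3 / 2 + m ^ 2 * (ξ / √β) ^ 2) := by ring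
      _ ≤ 2 * m := le_trans (by gcongr) hδm.le
  · exact le_trans (by gcongr) hδa.le

/-- Basic energy estimate: solutions of `V' = −(iξÃ(ξ) + ξ²B̃)V` decay like
`exp(−c₀ξ²t)`, with constants independent of `ξ` and of the solution. -/
theorem nsfk_basic_energy_estimate (ρ θ pρ pθ eθ k μ α u : ℝ)
    (hρ : 0 < ρ) (hθ : 0 < θ) (hpρ : 0 < pρ) (hpθ : 0 < pθ) (heθ : 0 < eθ)
    (hk : 0 < k) (hμ : 0 < μ) (hα : 0 < α) :
    ∃ C : ℝ, 0 < C ∧ ∃ c₀ : ℝ, 0 < c₀ ∧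
      ∀ ξ : ℝ,
        let β : ℝ := pρ + ξ ^ 2 * k * ρ
        let c : ℝ := pθ * Real.sqrt θ / (Real.sqrt eθ * ρ)
        let Atilde : Matrix (Fin 3) (Fin 3) ℂ :=
          (!![u, Real.sqrt β, 0; Real.sqrt β, u, c; 0, c, u]).map
            (fun x : ℝ => (x : ℂ))
        let Btilde : Matrix (Fin 3) (Fin 3) ℂ :=
          (!![0, 0, 0; 0, μ / ρ, 0; 0, 0, α / (eθ * ρ)]).map
            (fun x : ℝ => (x : ℂ))
        ∀ V : ℝ → (Fin 3 → ℂ),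
          (∀ t : ℝ, 0 ≤ t →
            HasDerivAt V
              (-(((Complex.I * (ξ : ℂ)) • Atilde + ((ξ : ℂ) ^ 2) • Btilde).mulVec (V t))) t) →
          ∀ t : ℝ, 0 ≤ t →
            ‖V t‖ ≤ C * Real.exp (-c₀ * ξ ^ 2 * t) * ‖V 0‖ :=
  nsfk_basic_energy_estimate_general ρ θ pρ pθ eθ k μ α u hρ hpρ heθ hk hμ hα
end

section
/- The product (Df⁰)ᵀ · DZ equals the diagonal matrix (1/θ)·diag(p_ρ/ρ, ρ, ρ·e_θ/θ); in particular it is symmetric, and it is positive definite whenever ρ > 0, θ > 0, p_ρ > 0 and e_θ > 0. (This identifies the symmetrizer A⁰(U) = D_Uf⁰(U)ᵀ·D²_V𝓔(f⁰(U))·D_Uf⁰(U) of the Navier–Stokes–Fourier system, where 𝓔 = −ρη is the entropy function.) -/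
open Matrix

/-- The symmetrizer `A⁰(U) = D_Uf⁰ᵀ·D²_V𝓔·D_Uf⁰ = (Df⁰)ᵀ·DZ` of the
Navier–Stokes–Fourier system is the diagonal matrix `(1/θ)·diag(p_ρ/ρ, ρ, ρ·e_θ/θ)`;
in particular it is symmetric, and positive definite whenever `p_ρ > 0` (together with
the standing assumptions `ρ > 0`, `θ > 0`, `e_θ > 0`). -/
theorem nsf_symmetrizer_A0 (ρ θ u p e η pρ pθ eρ eθ ηρ ηθ : ℝ)
    (hρ : 0 < ρ) (hθ : 0 < θ) (heθ : 0 < eθ) :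
    let Df0 : Matrix (Fin 3) (Fin 3) ℝ :=
      !![1, 0, 0; u, ρ, 0; e + u ^ 2 / 2 + ρ * eρ, ρ * u, ρ * eθ]
    let DZ : Matrix (Fin 3) (Fin 3) ℝ :=
      (1 / θ) • !![pρ / ρ, -u, -(e - u ^ 2 / 2 + ρ * eρ) / θ; 0, 1, -u / θ; 0, 0, 1 / θ]
    Df0ᵀ * DZ = (1 / θ) • !![pρ / ρ, 0, 0; 0, ρ, 0; 0, 0, ρ * eθ / θ] ∧
      (Df0ᵀ * DZ).IsSymm ∧
      (0 < pρ → (Df0ᵀ * DZ).PosDef) := by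
  intro Df0 DZ
  have hρ' := hρ.ne'
  have hθ' := hθ.ne'
  have heq : Df0ᵀ * DZ = (1 / θ) • !![pρ / ρ, 0, 0; 0, ρ, 0; 0, 0, ρ * eθ / θ] := by
    show (!![1, 0, 0; u, ρ, 0; e + u ^ 2 / 2 + ρ * eρ, ρ * u, ρ * eθ] : Matrix (Fin 3) (Fin 3) ℝ)ᵀ
        * ((1 / θ) • !![pρ / ρ, -u, -(e - u ^ 2 / 2 + ρ * eρ) / θ; 0, 1, -u / θ; 0, 0, 1 / θ])
        = (1 / θ) • !![pρ / ρ, 0, 0; 0, ρ, 0; 0, 0, ρ * eθ / θ]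
    ext i j
    fin_cases i <;> fin_cases j <;>
      simp [Matrix.mul_apply, Fin.sum_univ_three, Matrix.transpose_apply, Matrix.vecHead, Matrix.vecTail] <;>
      field_simp <;> ring
  have hdiag : (1 / θ) • (!![pρ / ρ, 0, 0; 0, ρ, 0; 0, 0, ρ * eθ / θ] : Matrix (Fin 3) (Fin 3) ℝ)
      = Matrix.diagonal ![pρ / ρ / θ, ρ / θ, ρ * eθ / θ / θ] := by
    ext i j
    fin_cases i <;> fin_cases j <;>
      simp [Matrix.diagonal, Matrix.vecHead, Matrix.vecTail] <;> ring
  refine ⟨heq, ?_, ?_⟩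
  · rw [heq, hdiag]
    exact Matrix.isSymm_diagonal _
  · intro hpρ
    rw [heq, hdiag]
    rw [Matrix.posDef_diagonal_iff]
    intro i
    fin_cases i <;> simp <;> positivity
end

section
/- Let μ > 0 and α > 0 and define the viscosity matrix G := [[0,0,0],[0,μ,0],[0,μ·u,α]]. Then the product (Df⁰)ᵀ · DZ · N · G equals the diagonal matrix (1/θ)·diag(0, μ, α/θ); in particular it is symmetric and positive semidefinite. (This identifies the symmetrized dissipation matrix B(U) = D_Uf⁰ᵀ·D²_V𝓔·G of the Navier–Stokes–Fourier system.) -/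
open Matrix

/-- The symmetrized dissipation matrix `B(U) = D_Uf⁰ᵀ·D²_V𝓔·G = (Df⁰)ᵀ·DZ·N·G` of the
Navier–Stokes–Fourier system equals `(1/θ)·diag(0, μ, α/θ)`; in particular it is
symmetric and positive semidefinite. -/
theorem nsf_dissipation_matrix (ρ θ u p e η pρ pθ eρ eθ ηρ ηθ μ α : ℝ)
    (hρ : 0 < ρ) (hθ : 0 < θ) (heθ : 0 < eθ) (hμ : 0 < μ) (hα : 0 < α) :
    let Df0 : Matrix (Fin 3) (Fin 3) ℝ :=
      !![1, 0, 0; u, ρ, 0; e + u ^ 2 / 2 + ρ * eρ, ρ * u, ρ * eθ]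
    let N : Matrix (Fin 3) (Fin 3) ℝ :=
      !![1, 0, 0; -u / ρ, 1 / ρ, 0;
         (u ^ 2 / 2 - e - ρ * eρ) / (ρ * eθ), -u / (ρ * eθ), 1 / (ρ * eθ)]
    let DZ : Matrix (Fin 3) (Fin 3) ℝ :=
      (1 / θ) • !![pρ / ρ, -u, -(e - u ^ 2 / 2 + ρ * eρ) / θ; 0, 1, -u / θ; 0, 0, 1 / θ]
    let G : Matrix (Fin 3) (Fin 3) ℝ := !![0, 0, 0; 0, μ, 0; 0, μ * u, α]
    Df0ᵀ * DZ * N * G = (1 / θ) • !![0, 0, 0; 0, μ, 0; 0, 0, α / θ] ∧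
      (Df0ᵀ * DZ * N * G).IsSymm ∧
      (Df0ᵀ * DZ * N * G).PosSemidef := by
  intro Df0 N DZ G
  have hρ0 : ρ ≠ 0 := hρ.ne'
  have hθ0 : θ ≠ 0 := hθ.ne'
  have heθ0 : eθ ≠ 0 := heθ.ne'
  have heq : Df0ᵀ * DZ * N * G = (1 / θ) • !![0, 0, 0; 0, μ, 0; 0, 0, α / θ] := by
    show (!![1, 0, 0; u, ρ, 0; e + u ^ 2 / 2 + ρ * eρ, ρ * u, ρ * eθ]ᵀ *
      ((1 / θ) • !![pρ / ρ, -u, -(e - u ^ 2 / 2 + ρ * eρ) / θ; 0, 1, -u / θ; 0, 0, 1 / θ]) *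
      !![1, 0, 0; -u / ρ, 1 / ρ, 0;
         (u ^ 2 / 2 - e - ρ * eρ) / (ρ * eθ), -u / (ρ * eθ), 1 / (ρ * eθ)] *
      !![0, 0, 0; 0, μ, 0; 0, μ * u, α]) = _
    ext i j
    fin_cases i <;> fin_cases j <;>
      simp [Matrix.mul_apply, Fin.sum_univ_succ, Matrix.transpose_apply,
        Matrix.vecHead, Matrix.vecTail] <;>
      first
        | rfl
        | (field_simp <;> first | ring1 | tauto | (left; left; ring1))
  have hdiag : (1 / θ) • !![(0:ℝ), 0, 0; 0, μ, 0; 0, 0, α / θ] =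
      Matrix.diagonal ![0, μ / θ, α / θ ^ 2] := by
    ext i j
    fin_cases i <;> fin_cases j <;>
      simp [Matrix.diagonal, Matrix.vecHead, Matrix.vecTail] <;> ring
  refine ⟨heq, ?_, ?_⟩
  · rw [heq, hdiag]
    exact Matrix.isSymm_diagonal _
  · rw [heq, hdiag]
    refine Matrix.posSemidef_diagonal_iff.mpr ?_
    intro i
    fin_cases i <;> simp [Matrix.vecHead, Matrix.vecTail] <;> positivity
end

section
/- Let k > 0 and define the capillarity matrix H := [[0,0,0],[k·ρ,0,0],[k·ρ·u,0,0]]. Then the product (Df⁰)ᵀ · DZ · N · H equals the matrix (1/θ)·[[0,0,0],[k·ρ,0,0],[0,0,0]]. (This identifies the non-symmetric capillarity coefficient matrix C(Ū) appearing in the partially symmetric perturbation system for the Navier–Stokes–Fourier–Korteweg equations.) -/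
open Matrix

/-- The non-symmetric capillarity coefficient matrix `C(Ū) = (Df⁰)ᵀ·DZ·N·H` appearing
in the partially symmetric perturbation system for the Navier–Stokes–Fourier–Korteweg
equations equals `(1/θ)·[[0,0,0],[kρ,0,0],[0,0,0]]`. -/
theorem nsfk_capillarity_matrix (ρ θ u p e η pρ pθ eρ eθ ηρ ηθ k : ℝ)
    (hρ : 0 < ρ) (hθ : 0 < θ) (heθ : 0 < eθ) (hk : 0 < k) :
    let Df0 : Matrix (Fin 3) (Fin 3) ℝ :=
      !![1, 0, 0; u, ρ, 0; e + u ^ 2 / 2 + ρ * eρ, ρ * u, ρ * eθ]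
    let N : Matrix (Fin 3) (Fin 3) ℝ :=
      !![1, 0, 0; -u / ρ, 1 / ρ, 0;
         (u ^ 2 / 2 - e - ρ * eρ) / (ρ * eθ), -u / (ρ * eθ), 1 / (ρ * eθ)]
    let DZ : Matrix (Fin 3) (Fin 3) ℝ :=
      (1 / θ) • !![pρ / ρ, -u, -(e - u ^ 2 / 2 + ρ * eρ) / θ; 0, 1, -u / θ; 0, 0, 1 / θ]
    let H : Matrix (Fin 3) (Fin 3) ℝ := !![0, 0, 0; k * ρ, 0, 0; k * ρ * u, 0, 0]
    Df0ᵀ * DZ * N * H = (1 / θ) • !![0, 0, 0; k * ρ, 0, 0; 0, 0, 0] := by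
  intro Df0 N DZ H
  simp only [Df0, N, DZ, H]
  ext i j
  fin_cases i <;> fin_cases j <;>
    simp [Matrix.mul_apply, Fin.sum_univ_succ, Matrix.smul_apply,
      Matrix.vecHead, Matrix.vecTail] <;>
    field_simp <;> ring
end
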